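/- Let s > 0 and a ∈ (0,1). The differential system y' = s y(1−y)/(y+(1+s)(1−y)), u' = u/2 + (u+v)y/2 − u/(y+(1+s)(1−y)), v' = v/2 + (u+v)(1−y)/2 − (1+s)v/(y+(1+s)(1−y)) admits a unique solution (y_t, u_t, v_t)_{t≥0} with initial condition (a, a, 0), and this solution is given explicitly by: y_t = F^{-1}(a^{1+s}/(1−a) · e^{st}) where F(x) = x^{1+s}/(1−x) maps [0,1) onto [0,∞); u_t = y_t · a^{(1+s)/(2s)} (1−a)^{−1/(2s)} [ (1−y_t)^{1/(2s)} y_t^{−(1+s)/(2s)} + ∫_a^{y_t} (1−x)^{1/(2s)} x^{−(1+s)/(2s)} (1/2 + 1/(2s(1−x))) dx ]; v_t = (1−y_t) · a^{(1+s)/(2s)} (1−a)^{−1/(2s)} ∫_a^{y_t} (1−x)^{1/(2s)} x^{−(1+s)/(2s)} (1/2 + 1/(2s(1−x))) dx. -/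

import Mathlib

/-!
The `y`-equation is autonomous and separable: since
`(log F)'(y) = (y + (1+s)(1-y)) / (y(1-y))`, it says exactly that `log F(y_t)` grows at rate `s`,
which gives `y_t = F⁻¹(F(a) e^{st})`. Along this `y`, the quotients `p = u/y` and `q = v/(1-y)`
satisfy `p = q + φ/φ(a)` with `φ(y) = (1-y)^{1/(2s)} y^{-(1+s)/(2s)}`, and
`dq/dy = φ (1/2 + 1/(2s(1-y))) / φ(a)`; integrating from `y = a` gives `uval` and `vval`.
Since `dp/dy = φ (1/2 - (1+s)/(2sy)) / φ(a) ≤ 0`, `p` decreases from `p(a) = 1`, and `0 ≤ q ≤ p`,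
so the solution stays in `[0,1]³`. The drift is `C¹` near the compact convex cube `[0,1]³`, hence
Lipschitz there, and uniqueness follows from Grönwall's inequality.
-/
open MeasureTheory Filter

/-- The drift function `g` of the dynamical system
`y' = s y(1−y)/(y+(1+s)(1−y))`,
`u' = u/2 + (u+v)y/2 − u/(y+(1+s)(1−y))`,
`v' = v/2 + (u+v)(1−y)/2 − (1+s)v/(y+(1+s)(1−y))`. -/
noncomputable def gdrift (s : ℝ) (p : ℝ × ℝ × ℝ) : ℝ × ℝ × ℝ :=
  (s * p.1 * (1 - p.1) / (p.1 + (1 + s) * (1 - p.1)),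
   p.2.1 / 2 + (p.2.1 + p.2.2) * p.1 / 2 - p.2.1 / (p.1 + (1 + s) * (1 - p.1)),
   p.2.2 / 2 + (p.2.1 + p.2.2) * (1 - p.1) / 2 -
     (1 + s) * p.2.2 / (p.1 + (1 + s) * (1 - p.1)))

/-- A solution of the dynamical system on `[0,∞)` with values in `[0,1]³` and
initial condition `(a, a, 0)`. -/
def IsSolSys (s a : ℝ) (z : ℝ → ℝ × ℝ × ℝ) : Prop :=
  z 0 = (a, a, 0) ∧ ∀ t ∈ Set.Ici (0 : ℝ),
    z t ∈ Set.Icc (0 : ℝ) 1 ×ˢ Set.Icc (0 : ℝ) 1 ×ˢ Set.Icc (0 : ℝ) 1 ∧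
    HasDerivWithinAt z (gdrift s (z t)) (Set.Ici 0) t

/-- The integral `∫_a^y (1−x)^{1/(2s)} x^{−(1+s)/(2s)} (1/2 + 1/(2s(1−x))) dx`. -/
noncomputable def intI (s a y : ℝ) : ℝ :=
  ∫ x in a..y, (1 - x) ^ (1 / (2 * s)) / x ^ ((1 + s) / (2 * s)) *
    (1 / 2 + 1 / (2 * s) * (1 / (1 - x)))

/-- `u` expressed as a function of `y`:
`u = y ⬝ a^{(1+s)/(2s)} (1−a)^{−1/(2s)} [(1−y)^{1/(2s)} y^{−(1+s)/(2s)} + ∫_a^y ⋯ dx]`. -/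
noncomputable def uval (s a y : ℝ) : ℝ :=
  y * (a ^ ((1 + s) / (2 * s)) / (1 - a) ^ (1 / (2 * s))) *
    ((1 - y) ^ (1 / (2 * s)) / y ^ ((1 + s) / (2 * s)) + intI s a y)

/-- `v` expressed as a function of `y`:
`v = (1−y) ⬝ a^{(1+s)/(2s)} (1−a)^{−1/(2s)} ∫_a^y ⋯ dx`. -/
noncomputable def vval (s a y : ℝ) : ℝ :=
  (1 - y) * (a ^ ((1 + s) / (2 * s)) / (1 - a) ^ (1 / (2 * s))) * intI s a y

open Set Real Topology

theorem eqOn_Ici_of_lipschitzOnWith {E : Type*} [NormedAddCommGroup E] [NormedSpace ℝ E]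
    {g : E → E} {S : Set E} {K : NNReal} (hg : LipschitzOnWith K g S) {z₁ z₂ : ℝ → E} {t₀ : ℝ}
    (h₁ : ∀ t ∈ Ici t₀, z₁ t ∈ S ∧ HasDerivWithinAt z₁ (g (z₁ t)) (Ici t₀) t)
    (h₂ : ∀ t ∈ Ici t₀, z₂ t ∈ S ∧ HasDerivWithinAt z₂ (g (z₂ t)) (Ici t₀) t)
    (h : z₁ t₀ = z₂ t₀) : EqOn z₁ z₂ (Ici t₀) := by
  intro t ht
  have hcont {z : ℝ → E} (hz : ∀ t ∈ Ici t₀, z t ∈ S ∧ HasDerivWithinAt z (g (z t)) (Ici t₀) t) :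
      ContinuousOn z (Icc t₀ t) :=
    fun τ hτ ↦ (hz τ hτ.1).2.continuousWithinAt.mono Icc_subset_Ici_self
  have hderiv {z : ℝ → E} (hz : ∀ t ∈ Ici t₀, z t ∈ S ∧ HasDerivWithinAt z (g (z t)) (Ici t₀) t)
      (τ : ℝ) (hτ : τ ∈ Ico t₀ t) : HasDerivWithinAt z (g (z τ)) (Ici τ) τ :=
    (hz τ hτ.1).2.mono (Ici_subset_Ici.2 hτ.1)
  exact ODE_solution_unique_of_mem_Icc_right (fun _ _ ↦ hg) (hcont h₁) (hderiv h₁)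
    (fun τ hτ ↦ (h₁ τ hτ.1).1) (hcont h₂) (hderiv h₂) (fun τ hτ ↦ (h₂ τ hτ.1).1) h
    ⟨ht, le_rfl⟩

theorem drift_denom_pos {s y : ℝ} (hs : -1 < s) (hy : y ∈ Icc (0 : ℝ) 1) :
    0 < y + (1 + s) * (1 - y) := by
  nlinarith [mul_nonneg (sub_nonneg.2 hy.2) hy.1,
    mul_nonneg (by linarith : (0 : ℝ) ≤ 1 + s) (sub_nonneg.2 hy.2)]

theorem contDiffOn_gdrift {s : ℝ} (hs : -1 < s) :
    ContDiffOn ℝ 1 (gdrift s) (Icc (0 : ℝ) 1 ×ˢ Icc (0 : ℝ) 1 ×ˢ Icc (0 : ℝ) 1) := by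
  have hden : ∀ p ∈ Icc (0 : ℝ) 1 ×ˢ Icc (0 : ℝ) 1 ×ˢ Icc (0 : ℝ) 1,
      p.1 + (1 + s) * (1 - p.1) ≠ 0 := fun p hp ↦ (drift_denom_pos hs hp.1).ne'
  unfold gdrift
  fun_prop (disch := exact hden)

theorem exists_lipschitzOnWith_gdrift {s : ℝ} (hs : -1 < s) :
    ∃ K, LipschitzOnWith K (gdrift s) (Icc (0 : ℝ) 1 ×ˢ Icc (0 : ℝ) 1 ×ˢ Icc (0 : ℝ) 1) :=
  (contDiffOn_gdrift hs).exists_lipschitzOnWith one_ne_zero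
    ((convex_Icc _ _).prod ((convex_Icc _ _).prod (convex_Icc _ _)))
    (isCompact_Icc.prod (isCompact_Icc.prod isCompact_Icc))

theorem IsSolSys.eqOn {s a : ℝ} (hs : -1 < s) {z₁ z₂ : ℝ → ℝ × ℝ × ℝ} (h₁ : IsSolSys s a z₁)
    (h₂ : IsSolSys s a z₂) : EqOn z₁ z₂ (Ici 0) :=
  have ⟨_, hK⟩ := exists_lipschitzOnWith_gdrift hs
  eqOn_Ici_of_lipschitzOnWith hK h₁.2 h₂.2 (h₁.1.trans h₂.1.symm)

/-- The map `F` of the paper. -/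
noncomputable def powOdds (s x : ℝ) : ℝ := x ^ (1 + s) / (1 - x)

section powOdds

variable {s : ℝ}

theorem powOdds_zero (hs : -1 < s) : powOdds s 0 = 0 := by
  simp [powOdds, zero_rpow (by linarith : 1 + s ≠ 0)]

theorem powOdds_pos {x : ℝ} (hx : x ∈ Ioo (0 : ℝ) 1) : 0 < powOdds s x :=
  div_pos (rpow_pos_of_pos hx.1 _) (sub_pos.2 hx.2)

theorem strictMonoOn_powOdds (hs : -1 < s) : StrictMonoOn (powOdds s) (Ico 0 1) :=
  fun x hx y hy hxy ↦ div_lt_div₀ (rpow_lt_rpow hx.1 hxy (by linarith)) (by linarith)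
    (rpow_nonneg hy.1 _) (sub_pos.2 hy.2)

theorem continuousOn_powOdds (hs : -1 < s) : ContinuousOn (powOdds s) (Ico 0 1) :=
  ContinuousOn.div (continuousOn_id.rpow_const fun _ _ ↦ Or.inr (by linarith)) (by fun_prop)
    fun _ hx ↦ (sub_pos.2 hx.2).ne'

theorem tendsto_powOdds_nhdsLT_one : Tendsto (powOdds s) (𝓝[<] 1) atTop := by
  have hnum : Tendsto (fun x : ℝ ↦ x ^ (1 + s)) (𝓝[<] 1) (𝓝 1) := by
    simpa using (continuousAt_id.rpow_const (Or.inl one_ne_zero)).tendsto.mono_left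
      nhdsWithin_le_nhds
  have hden : Tendsto (fun x : ℝ ↦ 1 - x) (𝓝[<] 1) (𝓝[>] 0) := by
    refine tendsto_nhdsWithin_iff.2 ⟨?_, ?_⟩
    · simpa using ((continuous_sub_left (1 : ℝ)).tendsto 1).mono_left nhdsWithin_le_nhds
    · filter_upwards [self_mem_nhdsWithin] with x hx using sub_pos.2 (mem_Iio.1 hx)
  exact hnum.pos_mul_atTop one_pos (tendsto_inv_nhdsGT_zero.comp hden)

theorem surjOn_powOdds (hs : -1 < s) : SurjOn (powOdds s) (Ico 0 1) (Ici 0) := by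
  intro c hc
  obtain ⟨b, hcb, hb⟩ := (tendsto_powOdds_nhdsLT_one.eventually_ge_atTop c).and
    (Ioo_mem_nhdsLT zero_lt_one) |>.exists
  obtain ⟨x, hx, rfl⟩ := intermediate_value_Icc hb.1.le
    ((continuousOn_powOdds hs).mono (Icc_subset_Ico_right hb.2))
    ⟨(powOdds_zero hs).le.trans hc, hcb⟩
  exact ⟨x, ⟨hx.1, hx.2.trans_lt hb.2⟩, rfl⟩

end powOdds

/-- The `y`-component of the solution, `y_t = F⁻¹(F(a) e^{st})`. -/
noncomputable def ySol (s a t : ℝ) : ℝ :=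
  Function.invFunOn (powOdds s) (Ico 0 1) (powOdds s a * exp (s * t))

section ySol

variable {s a : ℝ}

theorem log_powOdds {x : ℝ} (hx : x ∈ Ioo (0 : ℝ) 1) :
    log (powOdds s x) = (1 + s) * log x - log (1 - x) := by
  rw [powOdds, log_div (rpow_pos_of_pos hx.1 _).ne' (sub_pos.2 hx.2).ne', log_rpow hx.1]

theorem exists_powOdds_eq_ySol (hs : 0 < s) (ha : a ∈ Ioo (0 : ℝ) 1) (t : ℝ) :
    ∃ x ∈ Ico (0 : ℝ) 1, powOdds s x = powOdds s a * exp (s * t) :=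
  surjOn_powOdds (by linarith) (mul_nonneg (powOdds_pos ha).le (exp_pos _).le)

theorem powOdds_ySol (hs : 0 < s) (ha : a ∈ Ioo (0 : ℝ) 1) (t : ℝ) :
    powOdds s (ySol s a t) = powOdds s a * exp (s * t) :=
  Function.invFunOn_eq (exists_powOdds_eq_ySol hs ha t)

theorem ySol_mem_Ioo (hs : 0 < s) (ha : a ∈ Ioo (0 : ℝ) 1) (t : ℝ) :
    ySol s a t ∈ Ioo (0 : ℝ) 1 := by
  obtain ⟨h0, h1⟩ := Function.invFunOn_mem (exists_powOdds_eq_ySol hs ha t)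
  refine ⟨h0.lt_of_ne fun h ↦ ?_, h1⟩
  have := powOdds_ySol hs ha t
  rw [ySol, ← h, powOdds_zero (by linarith)] at this
  exact (mul_pos (powOdds_pos ha) (exp_pos _)).ne this

theorem strictMono_ySol (hs : 0 < s) (ha : a ∈ Ioo (0 : ℝ) 1) : StrictMono (ySol s a) :=
  fun t₁ t₂ h ↦ by
    rw [← (strictMonoOn_powOdds (s := s) (by linarith)).lt_iff_lt
      (Ioo_subset_Ico_self (ySol_mem_Ioo hs ha t₁)) (Ioo_subset_Ico_self (ySol_mem_Ioo hs ha t₂)),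
      powOdds_ySol hs ha, powOdds_ySol hs ha]
    exact mul_lt_mul_of_pos_left (exp_lt_exp.2 (mul_lt_mul_of_pos_left h hs)) (powOdds_pos ha)

theorem ySol_zero (hs : 0 < s) (ha : a ∈ Ioo (0 : ℝ) 1) : ySol s a 0 = a :=
  (strictMonoOn_powOdds (by linarith)).injOn (Ioo_subset_Ico_self (ySol_mem_Ioo hs ha 0))
    (Ioo_subset_Ico_self ha) (by simp [powOdds_ySol hs ha])

/-- The time at which `ySol s a` reaches `y`. -/
noncomputable def ySolTime (s a y : ℝ) : ℝ :=
  ((1 + s) * log y - log (1 - y) - log (powOdds s a)) / s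

theorem ySolTime_ySol (hs : 0 < s) (ha : a ∈ Ioo (0 : ℝ) 1) (t : ℝ) :
    ySolTime s a (ySol s a t) = t := by
  rw [ySolTime, ← log_powOdds (ySol_mem_Ioo hs ha t), powOdds_ySol hs ha,
    log_mul (powOdds_pos ha).ne' (exp_pos _).ne', log_exp]
  field_simp
  ring

theorem ySol_ySolTime (hs : 0 < s) (ha : a ∈ Ioo (0 : ℝ) 1) {y : ℝ} (hy : y ∈ Ioo (0 : ℝ) 1) :
    ySol s a (ySolTime s a y) = y := by
  refine (strictMonoOn_powOdds (by linarith)).injOn (Ioo_subset_Ico_self (ySol_mem_Ioo hs ha _))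
    (Ioo_subset_Ico_self hy) ?_
  rw [powOdds_ySol hs ha, ySolTime, ← log_powOdds hy, mul_div_cancel₀ _ hs.ne', exp_sub,
    exp_log (powOdds_pos hy), exp_log (powOdds_pos ha)]
  field_simp [(powOdds_pos ha).ne']

theorem continuous_ySol (hs : 0 < s) (ha : a ∈ Ioo (0 : ℝ) 1) : Continuous (ySol s a) := by
  refine continuous_iff_continuousAt.2 fun t ↦ ?_
  refine (strictMono_ySol hs ha).strictMonoOn univ |>.continuousAt_of_image_mem_nhds univ_mem
    (mem_of_superset (Ioo_mem_nhds (ySol_mem_Ioo hs ha t).1 (ySol_mem_Ioo hs ha t).2) ?_)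
  exact fun y hy ↦ ⟨_, mem_univ _, ySol_ySolTime hs ha hy⟩

theorem hasDerivAt_ySolTime {y : ℝ} (hy : y ∈ Ioo (0 : ℝ) 1) :
    HasDerivAt (ySolTime s a) (((1 + s) / y + 1 / (1 - y)) / s) y := by
  have h := ((((hasDerivAt_log hy.1.ne').const_mul (1 + s)).sub
    (((hasDerivAt_id y).const_sub 1).log (sub_pos.2 hy.2).ne')).sub_const
    (log (powOdds s a))).div_const s
  exact h.congr_deriv (by simp [div_eq_mul_inv])

theorem hasDerivAt_ySol (hs : 0 < s) (ha : a ∈ Ioo (0 : ℝ) 1) (t : ℝ) :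
    HasDerivAt (ySol s a) (s * ySol s a t * (1 - ySol s a t) /
      (ySol s a t + (1 + s) * (1 - ySol s a t))) t := by
  obtain ⟨hy0, hy1⟩ := ySol_mem_Ioo hs ha t
  have hτ' : ((1 + s) / ySol s a t + 1 / (1 - ySol s a t)) / s ≠ 0 :=
    (div_pos (add_pos (div_pos (by linarith) hy0) (one_div_pos.2 (sub_pos.2 hy1))) hs).ne'
  refine (HasDerivAt.of_local_left_inverse (continuous_ySol hs ha).continuousAt
    (hasDerivAt_ySolTime ⟨hy0, hy1⟩) hτ' (.of_forall (ySolTime_ySol hs ha))).congr_deriv ?_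
  have := sub_pos.2 hy1
  field_simp
  ring

end ySol

noncomputable def weight (s y : ℝ) : ℝ := (1 - y) ^ (1 / (2 * s)) / y ^ ((1 + s) / (2 * s))

noncomputable def initScale (s a : ℝ) : ℝ := a ^ ((1 + s) / (2 * s)) / (1 - a) ^ (1 / (2 * s))

/-- `v/(1-y)` along the solution. -/
noncomputable def vRatio (s a y : ℝ) : ℝ := initScale s a * intI s a y

/-- `u/y` along the solution. -/
noncomputable def uRatio (s a y : ℝ) : ℝ := initScale s a * weight s y + vRatio s a y

section ratios

variable {s a y : ℝ}

theorem uval_eq_mul_uRatio : uval s a y = y * uRatio s a y := by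
  rw [uval, uRatio, vRatio, initScale, weight]
  ring

theorem vval_eq_mul_vRatio : vval s a y = (1 - y) * vRatio s a y := by
  rw [vval, vRatio, initScale, mul_assoc]

theorem weight_pos (hy : y ∈ Ioo (0 : ℝ) 1) : 0 < weight s y :=
  div_pos (rpow_pos_of_pos (sub_pos.2 hy.2) _) (rpow_pos_of_pos hy.1 _)

theorem initScale_pos (ha : a ∈ Ioo (0 : ℝ) 1) : 0 < initScale s a :=
  div_pos (rpow_pos_of_pos ha.1 _) (rpow_pos_of_pos (sub_pos.2 ha.2) _)

theorem initScale_mul_weight_self (ha : a ∈ Ioo (0 : ℝ) 1) : initScale s a * weight s a = 1 := by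
  rw [initScale, weight, div_mul_div_comm, mul_comm ((1 - a) ^ _),
    div_self (mul_pos (rpow_pos_of_pos ha.1 _) (rpow_pos_of_pos (sub_pos.2 ha.2) _)).ne']

theorem hasDerivAt_weight (hy : y ∈ Ioo (0 : ℝ) 1) :
    HasDerivAt (weight s) (weight s y * (-(1 / (2 * s)) / (1 - y) - (1 + s) / (2 * s) / y)) y := by
  have h1y := sub_pos.2 hy.2
  have hnum := (hasDerivAt_rpow_const (p := 1 / (2 * s)) (Or.inl h1y.ne')).comp y
    ((hasDerivAt_id y).const_sub 1)
  have hden := hasDerivAt_rpow_const (p := (1 + s) / (2 * s)) (Or.inl hy.1.ne')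
  refine (hnum.div hden (rpow_pos_of_pos hy.1 _).ne').congr_deriv ?_
  rw [Function.comp_apply, rpow_sub_one h1y.ne', rpow_sub_one hy.1.ne', weight]
  have := (rpow_pos_of_pos hy.1 ((1 + s) / (2 * s))).ne'
  field_simp

theorem continuousAt_intI_integrand (hy : y ∈ Ioo (0 : ℝ) 1) :
    ContinuousAt (fun x ↦ weight s x * (1 / 2 + 1 / (2 * s) * (1 / (1 - x)))) y :=
  (hasDerivAt_weight hy).continuousAt.mul
    (continuousAt_const.add (continuousAt_const.mul
      (continuousAt_const.div (by fun_prop) (sub_pos.2 hy.2).ne')))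

theorem hasDerivAt_intI (ha : a ∈ Ioo (0 : ℝ) 1) (hy : y ∈ Ioo (0 : ℝ) 1) :
    HasDerivAt (intI s a) (weight s y * (1 / 2 + 1 / (2 * s) * (1 / (1 - y)))) y := by
  have hsub : uIcc a y ⊆ Ioo 0 1 := ordConnected_Ioo.uIcc_subset ha hy
  exact intervalIntegral.integral_hasDerivAt_right
    (ContinuousOn.intervalIntegrable fun x hx ↦
      (continuousAt_intI_integrand (hsub hx)).continuousWithinAt)
    (ContinuousAt.stronglyMeasurableAtFilter isOpen_Ioo
      (fun x hx ↦ continuousAt_intI_integrand hx) y hy)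
    (continuousAt_intI_integrand hy)

theorem intI_nonneg (hs : 0 < s) (ha : a ∈ Ioo (0 : ℝ) 1) (hy : y ∈ Ico a 1) :
    0 ≤ intI s a y := by
  refine intervalIntegral.integral_nonneg hy.1 fun x hx ↦ ?_
  have hx' : x ∈ Ioo (0 : ℝ) 1 := ⟨ha.1.trans_le hx.1, hx.2.trans_lt hy.2⟩
  have := sub_pos.2 hx'.2
  exact mul_nonneg (weight_pos hx').le (by positivity)

theorem hasDerivAt_vRatio (ha : a ∈ Ioo (0 : ℝ) 1) (hy : y ∈ Ioo (0 : ℝ) 1) :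
    HasDerivAt (vRatio s a)
      (initScale s a * weight s y * (1 / 2 + 1 / (2 * s) * (1 / (1 - y)))) y :=
  ((hasDerivAt_intI ha hy).const_mul (initScale s a)).congr_deriv (mul_assoc _ _ _).symm

theorem hasDerivAt_uRatio (ha : a ∈ Ioo (0 : ℝ) 1) (hy : y ∈ Ioo (0 : ℝ) 1) :
    HasDerivAt (uRatio s a) (initScale s a * weight s y * (1 / 2 - (1 + s) / (2 * s) / y)) y :=
  (((hasDerivAt_weight hy).const_mul (initScale s a)).add
    (hasDerivAt_vRatio ha hy)).congr_deriv (by ring)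

theorem hasDerivAt_uval (ha : a ∈ Ioo (0 : ℝ) 1) (hy : y ∈ Ioo (0 : ℝ) 1) :
    HasDerivAt (uval s a)
      (uRatio s a y + y * (initScale s a * weight s y * (1 / 2 - (1 + s) / (2 * s) / y))) y := by
  rw [show uval s a = fun y ↦ y * uRatio s a y from funext fun _ ↦ uval_eq_mul_uRatio]
  exact ((hasDerivAt_id' y).mul (hasDerivAt_uRatio ha hy)).congr_deriv (by rw [one_mul])

theorem hasDerivAt_vval (ha : a ∈ Ioo (0 : ℝ) 1) (hy : y ∈ Ioo (0 : ℝ) 1) :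
    HasDerivAt (vval s a) (-vRatio s a y +
      (1 - y) * (initScale s a * weight s y * (1 / 2 + 1 / (2 * s) * (1 / (1 - y))))) y := by
  rw [show vval s a = fun y ↦ (1 - y) * vRatio s a y from funext fun _ ↦ vval_eq_mul_vRatio]
  exact (((hasDerivAt_id' y).const_sub 1).mul (hasDerivAt_vRatio ha hy)).congr_deriv
    (by rw [neg_one_mul])

theorem vRatio_self : vRatio s a a = 0 := by
  rw [vRatio, intI, intervalIntegral.integral_same, mul_zero]

theorem uRatio_self (ha : a ∈ Ioo (0 : ℝ) 1) : uRatio s a a = 1 := by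
  rw [uRatio, vRatio_self, add_zero, initScale_mul_weight_self ha]

theorem vRatio_nonneg (hs : 0 < s) (ha : a ∈ Ioo (0 : ℝ) 1) (hy : y ∈ Ico a 1) :
    0 ≤ vRatio s a y :=
  mul_nonneg (initScale_pos ha).le (intI_nonneg hs ha hy)

theorem vRatio_le_uRatio (ha : a ∈ Ioo (0 : ℝ) 1) (hy : y ∈ Ioo (0 : ℝ) 1) :
    vRatio s a y ≤ uRatio s a y :=
  le_add_of_nonneg_left (mul_nonneg (initScale_pos ha).le (weight_pos hy).le)

theorem antitoneOn_uRatio (hs : 0 < s) (ha : a ∈ Ioo (0 : ℝ) 1) :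
    AntitoneOn (uRatio s a) (Ioo 0 1) := by
  refine antitoneOn_of_hasDerivWithinAt_nonpos (convex_Ioo 0 1)
    (fun x hx ↦ (hasDerivAt_uRatio ha hx).continuousAt.continuousWithinAt)
    (fun x hx ↦ (hasDerivAt_uRatio ha (interior_subset hx)).hasDerivWithinAt) fun x hx ↦ ?_
  rw [interior_Ioo] at hx
  refine mul_nonpos_of_nonneg_of_nonpos (mul_nonneg (initScale_pos ha).le (weight_pos hx).le) ?_
  rw [sub_nonpos, div_div, le_div_iff₀ (by nlinarith [hx.1])]
  nlinarith [hx.2]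

theorem uRatio_le_one (hs : 0 < s) (ha : a ∈ Ioo (0 : ℝ) 1) (hy : y ∈ Ico a 1) :
    uRatio s a y ≤ 1 :=
  uRatio_self (s := s) ha ▸ antitoneOn_uRatio hs ha ha ⟨ha.1.trans_le hy.1, hy.2⟩ hy.1

theorem uval_mem_Icc (hs : 0 < s) (ha : a ∈ Ioo (0 : ℝ) 1) (hy : y ∈ Ico a 1) :
    uval s a y ∈ Icc (0 : ℝ) 1 := by
  have hy' : y ∈ Ioo (0 : ℝ) 1 := ⟨ha.1.trans_le hy.1, hy.2⟩
  rw [uval_eq_mul_uRatio]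
  exact unitInterval.mul_mem ⟨hy'.1.le, hy'.2.le⟩
    ⟨(vRatio_nonneg hs ha hy).trans (vRatio_le_uRatio ha hy'), uRatio_le_one hs ha hy⟩

theorem vval_mem_Icc (hs : 0 < s) (ha : a ∈ Ioo (0 : ℝ) 1) (hy : y ∈ Ico a 1) :
    vval s a y ∈ Icc (0 : ℝ) 1 := by
  have hy' : y ∈ Ioo (0 : ℝ) 1 := ⟨ha.1.trans_le hy.1, hy.2⟩
  rw [vval_eq_mul_vRatio]
  exact unitInterval.mul_mem ⟨(sub_pos.2 hy'.2).le, by linarith [hy'.1]⟩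
    ⟨vRatio_nonneg hs ha hy, (vRatio_le_uRatio ha hy').trans (uRatio_le_one hs ha hy)⟩

end ratios

noncomputable def zSol (s a t : ℝ) : ℝ × ℝ × ℝ :=
  (ySol s a t, uval s a (ySol s a t), vval s a (ySol s a t))

section zSol

variable {s a : ℝ}

theorem hasDerivAt_zSol (hs : 0 < s) (ha : a ∈ Ioo (0 : ℝ) 1) (t : ℝ) :
    HasDerivAt (zSol s a) (gdrift s (zSol s a t)) t := by
  have hy := ySol_mem_Ioo hs ha t
  have hy' := hasDerivAt_ySol hs ha t
  have hu := (hasDerivAt_uval (s := s) ha hy).comp t hy'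
  have hv := (hasDerivAt_vval (s := s) ha hy).comp t hy'
  refine (hy'.prodMk (hu.prodMk hv)).congr_deriv ?_
  have hD := drift_denom_pos (by linarith) ⟨hy.1.le, hy.2.le⟩
  have h1y := sub_pos.2 hy.2
  simp only [gdrift, zSol, uval_eq_mul_uRatio, vval_eq_mul_vRatio, uRatio]
  generalize ySol s a t = y at *
  generalize initScale s a * weight s y = f
  generalize vRatio s a y = q
  have hy0 := hy.1
  refine Prod.ext rfl (Prod.ext ?_ ?_) <;> field_simp <;> ring

theorem isSolSys_zSol (hs : 0 < s) (ha : a ∈ Ioo (0 : ℝ) 1) : IsSolSys s a (zSol s a) := by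
  refine ⟨?_, fun t ht ↦ ⟨?_, (hasDerivAt_zSol hs ha t).hasDerivWithinAt⟩⟩
  · rw [zSol, ySol_zero hs ha, uval_eq_mul_uRatio, uRatio_self ha, mul_one, vval_eq_mul_vRatio,
      vRatio_self, mul_zero]
  · have hy : ySol s a t ∈ Ico a 1 :=
      ⟨(ySol_zero hs ha).symm.trans_le ((strictMono_ySol hs ha).monotone ht),
        (ySol_mem_Ioo hs ha t).2⟩
    exact ⟨⟨(ha.1.trans_le hy.1).le, hy.2.le⟩, uval_mem_Icc hs ha hy, vval_mem_Icc hs ha hy⟩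

end zSol

theorem dynamical_system_unique_solution
    (s a : ℝ) (hs : 0 < s) (ha : a ∈ Set.Ioo (0 : ℝ) 1) :
    (∃ z : ℝ → ℝ × ℝ × ℝ, IsSolSys s a z) ∧
    (∀ z₁ z₂ : ℝ → ℝ × ℝ × ℝ, IsSolSys s a z₁ → IsSolSys s a z₂ →
      Set.EqOn z₁ z₂ (Set.Ici 0)) ∧
    (∀ z : ℝ → ℝ × ℝ × ℝ, IsSolSys s a z → ∀ t ∈ Set.Ici (0 : ℝ),
      ((z t).1 ∈ Set.Ico (0 : ℝ) 1 ∧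
        (z t).1 ^ (1 + s) / (1 - (z t).1) = a ^ (1 + s) / (1 - a) * Real.exp (s * t)) ∧
      (z t).2.1 = uval s a (z t).1 ∧
      (z t).2.2 = vval s a (z t).1) := by
  have hsol := isSolSys_zSol hs ha
  have huniq : ∀ z₁ z₂ : ℝ → ℝ × ℝ × ℝ, IsSolSys s a z₁ → IsSolSys s a z₂ →
      Set.EqOn z₁ z₂ (Set.Ici 0) :=
    fun _ _ h₁ h₂ ↦ h₁.eqOn (by linarith) h₂
  refine ⟨⟨zSol s a, hsol⟩, huniq, fun z hz t ht ↦ ?_⟩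
  rw [huniq z _ hz hsol ht]
  exact ⟨⟨Ioo_subset_Ico_self (ySol_mem_Ioo hs ha t), powOdds_ySol hs ha t⟩, rfl, rfl⟩
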